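/- arXiv:0912.4017 — 2 statements merged into one kernel-verified Lean document; each statement's English description precedes it below -/
import Mathlib

section
/- Let L/K be a field extension (not necessarily algebraic). If L is quasi-galois over K (i.e., for every intermediate field K ⊆ F ⊆ L, every irreducible polynomial in F[X] with a root in L splits into linear factors in L[X]) and L is a finitely generated, separably generated extension of K, then L is Galois over K, i.e., the fixed field of the automorphism group Aut(L/K) is exactly K. -/
/-!
Write `Δ = {δ₁, …, δᵣ}` (finite, as `L/K` is finitely generated). For every `n` that is nonzero
in `L`, each `δᵢ` is a root of the separable polynomial `Xⁿ - δᵢⁿ`, so `L` is separable over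
`K(Δⁿ) = K(δ₁ⁿ, …, δᵣⁿ)`; being quasi-galois it is also normal, hence Galois, over `K(Δⁿ)`.
So an element `x` fixed by `Aut(L/K)` lies in `K(Δⁿ)` for all such `n`. The variables are then
removed one at a time: with `E = K(δ₂ⁿ, …, δᵣⁿ)`, `x ∈ E((δ₁ⁿ)^q)` for infinitely many `q`, and
`⋂_q F(t^q) = F` for `t` transcendental over `F`, since `[F(t) : F(t^q)] = q` whereas
`[F(t) : F(x)]` is finite for every `x ∈ F(t) \ F`.
-/

open Polynomial IntermediateField Filter

namespace RatFunc

variable {K : Type*} [Field K]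

theorem finrank_adjoin_X_pow (n : ℕ) : Module.finrank K⟮(X ^ n : K⟮X⟯)⟯ K⟮X⟯ = n := by
  rw [finrank_eq_max_natDegree, ← algebraMap_X, ← map_pow, num_algebraMap, denom_algebraMap]
  simp

theorem mem_bot_of_frequently_mem_adjoin_X_pow {f : K⟮X⟯}
    (h : ∃ᶠ n in atTop, f ∈ K⟮(X ^ n : K⟮X⟯)⟯) : f ∈ (⊥ : IntermediateField K K⟮X⟯) := by
  by_contra hf
  have hd : Module.finrank K⟮f⟯ K⟮X⟯ ≠ 0 := by
    rw [finrank_eq_max_natDegree, ne_eq, Nat.max_eq_zero_iff, ← eq_C_iff]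
    rintro ⟨c, rfl⟩
    exact hf (IntermediateField.algebraMap_mem _ c)
  obtain ⟨n, hn, hfn⟩ := frequently_atTop.1 h (Module.finrank K⟮f⟯ K⟮X⟯ + 1)
  have hdvd := finrank_dvd_of_le_left (adjoin_simple_le_iff.2 hfn)
  rw [finrank_adjoin_X_pow] at hdvd
  exact absurd (Nat.le_of_dvd (Nat.pos_of_ne_zero hd) hdvd) (by omega)

end RatFunc

theorem frequently_natCast_ne_zero (R : Type*) [AddMonoidWithOne R] [NeZero (1 : R)] :
    ∃ᶠ n : ℕ in atTop, (n : R) ≠ 0 := by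
  refine frequently_atTop.2 fun a => ?_
  by_cases ha : (a : R) = 0
  · exact ⟨a + 1, by omega, by simp [ha]⟩
  · exact ⟨a, le_rfl, ha⟩

section SimpleExtension

variable {F L : Type*} [Field F] [Field L] [Algebra F L]

theorem Transcendental.mem_bot_of_frequently_mem_adjoin_pow {t x : L} (ht : Transcendental F t)
    (h : ∃ᶠ n in atTop, x ∈ F⟮t ^ n⟯) : x ∈ (⊥ : IntermediateField F L) := by
  let φ : RatFunc F →ₐ[F] L := F⟮t⟯.val.comp (RatFunc.algEquivOfTranscendental t ht).toAlgHom
  have hφ (n : ℕ) : F⟮t ^ n⟯ = F⟮(RatFunc.X ^ n : RatFunc F)⟯.map φ := by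
    rw [adjoin_map, Set.image_singleton, map_pow]
    simp [φ]
  obtain ⟨n₀, hn₀⟩ := h.exists
  rw [hφ] at hn₀
  obtain ⟨f, -, rfl⟩ := hn₀
  have hf : f ∈ (⊥ : IntermediateField F (RatFunc F)) := by
    refine RatFunc.mem_bot_of_frequently_mem_adjoin_X_pow (h.mono fun n hn => ?_)
    rw [hφ] at hn
    obtain ⟨g, hg, hgf⟩ := hn
    rwa [← φ.injective hgf]
  obtain ⟨c, rfl⟩ := hf
  exact ⟨c, (φ.commutes c).symm⟩

theorem isSeparable_of_pow_eq_algebraMap {y : L} {n : ℕ} {c : F} (hn : (n : L) ≠ 0)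
    (hy : y ≠ 0) (hc : y ^ n = algebraMap F L c) : IsSeparable F y := by
  have hn' : (n : F) ≠ 0 := fun h => hn (by simpa using congrArg (algebraMap F L) h)
  have hc' : c ≠ 0 := by
    rintro rfl
    exact hy (pow_eq_zero_iff'.1 (hc.trans (map_zero _))).1
  refine (separable_X_pow_sub_C c hn' hc').of_dvd (minpoly.dvd F y ?_)
  simp [← hc]

end SimpleExtension

section Separable

variable {K L : Type*} [Field K] [Field L] [Algebra K L]

theorem Algebra.IsSeparable.of_le_restrictScalars_separableClosure {E F : IntermediateField K L}
    [Algebra.IsSeparable E L] (h : E ≤ (separableClosure F L).restrictScalars K) :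
    Algebra.IsSeparable F L := by
  rw [← separableClosure.eq_top_iff, ← restrictScalars_eq_top_iff (K := K), _root_.eq_top_iff]
  calc ⊤ = (separableClosure E L).restrictScalars K := by
        rw [(separableClosure.eq_top_iff E L).2 ‹_›, restrictScalars_top]
    _ ≤ _ := (separableClosureOperator K L).le_closure_iff.1 h

theorem isSeparable_adjoin_pow_image {Δ : Set L} [Algebra.IsSeparable (adjoin K Δ) L]
    (hΔ : 0 ∉ Δ) {n : ℕ} (hn : (n : L) ≠ 0) :
    Algebra.IsSeparable (adjoin K ((· ^ n) '' Δ)) L := by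
  refine Algebra.IsSeparable.of_le_restrictScalars_separableClosure (E := adjoin K Δ)
    (adjoin_le_iff.2 fun y hy => ?_)
  have hyn : y ^ n ∈ adjoin K ((· ^ n) '' Δ) := subset_adjoin _ _ ⟨y, hy, rfl⟩
  exact mem_separableClosure_iff.2
    (isSeparable_of_pow_eq_algebraMap (c := ⟨_, hyn⟩) hn (ne_of_mem_of_not_mem hy hΔ) rfl)

end Separable

def IsQuasiGalois (K L : Type*) [Field K] [Field L] [Algebra K L] : Prop :=
  ∀ (F : IntermediateField K L) (f : Polynomial F), Irreducible f →
    (∃ x : L, Polynomial.aeval x f = 0) → (f.map (algebraMap F L)).Splits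

namespace IsQuasiGalois

variable {K L : Type*} [Field K] [Field L] [Algebra K L]

theorem normal (h : IsQuasiGalois K L) (F : IntermediateField K L) [Algebra.IsAlgebraic F L] :
    Normal F L :=
  normal_iff.2 fun y =>
    have hy := Algebra.IsIntegral.isIntegral (R := F) y
    ⟨hy, h F _ (minpoly.irreducible hy) ⟨y, minpoly.aeval F y⟩⟩

theorem mem_of_forall_algEquiv_apply_eq (h : IsQuasiGalois K L) (F : IntermediateField K L)
    [Algebra.IsSeparable F L] {x : L} (hx : ∀ σ : L ≃ₐ[K] L, σ x = x) : x ∈ F := by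
  have := h.normal F
  have : IsGalois F L := ⟨⟩
  obtain ⟨y, rfl⟩ := (InfiniteGalois.mem_bot_iff_fixed (k := F) x).2
    fun σ => hx (σ.restrictScalars K)
  exact y.2

end IsQuasiGalois

section PowerImages

variable {K L : Type*} [Field K] [Field L] [Algebra K L]

theorem mem_adjoin_pow_image_of_forall_mem_adjoin_pow_image_insert {A : Set L} {t x : L}
    (ht : Transcendental (adjoin K A) t) {M : Submonoid ℕ} (hM0 : 0 ∉ M)
    (hM : ∃ᶠ q in atTop, q ∈ M) (hx : ∀ m ∈ M, x ∈ adjoin K ((· ^ m) '' insert t A))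
    {n : ℕ} (hn : n ∈ M) : x ∈ adjoin K ((· ^ n) '' A) := by
  set E := adjoin K ((· ^ n) '' A)
  have hEA : E ≤ adjoin K A :=
    adjoin_le_iff.2 fun _ ⟨a, ha, hy⟩ => hy ▸ pow_mem (subset_adjoin K A ha) n
  have htE : Transcendental E (t ^ n) :=
    (Transcendental.of_tower_top_of_subalgebra_le (A := E.toSubalgebra)
      (B := (adjoin K A).toSubalgebra) hEA ht).pow
      (Nat.pos_of_ne_zero (ne_of_mem_of_not_mem hn hM0))
  suffices x ∈ (⊥ : IntermediateField E L) by
    obtain ⟨y, rfl⟩ := this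
    exact y.2
  refine htE.mem_bot_of_frequently_mem_adjoin_pow (hM.mono fun q hq => ?_)
  have hle : adjoin K ((· ^ (n * q)) '' insert t A) ≤ (E⟮(t ^ n) ^ q⟯).restrictScalars K := by
    rw [adjoin_le_iff, Set.image_insert_eq, Set.insert_subset_iff]
    refine ⟨?_, ?_⟩
    · rw [pow_mul]
      exact mem_adjoin_simple_self E _
    · rintro _ ⟨a, ha, rfl⟩
      dsimp only
      rw [pow_mul]
      exact pow_mem (IntermediateField.algebraMap_mem _
        (⟨a ^ n, subset_adjoin K _ ⟨a, ha, rfl⟩⟩ : E)) q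
  exact hle (hx _ (M.mul_mem hn hq))

theorem mem_bot_of_forall_mem_adjoin_pow_image {Δ : Set L} (hfin : Δ.Finite)
    (hΔ : AlgebraicIndepOn K id Δ) {M : Submonoid ℕ} (hM0 : 0 ∉ M)
    (hM : ∃ᶠ q in atTop, q ∈ M) {x : L} (hx : ∀ n ∈ M, x ∈ adjoin K ((· ^ n) '' Δ)) :
    x ∈ (⊥ : IntermediateField K L) := by
  induction Δ, hfin using Set.Finite.induction_on with
  | empty =>
    obtain ⟨n, hn⟩ := hM.exists
    simpa using hx n hn
  | @insert t A htA _ ih =>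
    obtain ⟨hA, ht⟩ := (AlgebraicIndepOn.insert_iff htA).1 hΔ
    rw [Set.image_id, ← IntermediateField.transcendental_adjoin_iff] at ht
    exact ih hA fun n hn =>
      mem_adjoin_pow_image_of_forall_mem_adjoin_pow_image_insert ht hM0 hM hx hn

end PowerImages

/-- If `L/K` is a finitely generated, separably generated field extension
that is quasi-galois over `K`, then `L` is Galois over `K` in the generalized sense:
the fixed field of `Aut(L/K)` is exactly `K`. -/
theorem quasiGalois_separablyGenerated_implies_galois
    {K L : Type*} [Field K] [Field L] [Algebra K L]
    -- L is finitely generated over K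
    (hfg : (⊤ : IntermediateField K L).FG)
    -- L is quasi-galois over K: for every intermediate field F and every irreducible
    -- polynomial over F with a root in L, the polynomial splits in L
    (hqg : ∀ (F : IntermediateField K L) (f : Polynomial F), Irreducible f →
      (∃ x : L, Polynomial.aeval x f = 0) → (f.map (algebraMap F L)).Splits)
    -- L is separably generated over K
    (hsg : ∃ Δ : Set L, IsTranscendenceBasis K ((↑) : Δ → L) ∧
      Algebra.IsSeparable (IntermediateField.adjoin K Δ) L) :
    IntermediateField.fixedField (⊤ : Subgroup (L ≃ₐ[K] L)) = ⊥ := by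
  obtain ⟨Δ, hΔ, hsep⟩ := hsg
  have : Algebra.EssFiniteType K L := fg_top_iff.1 hfg
  have hfin : Δ.Finite := Set.finite_coe_iff.1 (finite_of_isTranscendenceBasis hΔ)
  have hΔ0 : 0 ∉ Δ := fun h => hΔ.1.ne_zero ⟨0, h⟩ rfl
  let M : Submonoid ℕ := (nonZeroDivisors L).comap (Nat.castRingHom L)
  have hM (n : ℕ) : n ∈ M ↔ (n : L) ≠ 0 := mem_nonZeroDivisors_iff_ne_zero
  refine le_antisymm (fun x hx => ?_) bot_le
  refine mem_bot_of_forall_mem_adjoin_pow_image hfin hΔ.1 (by simp [hM])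
    ((frequently_natCast_ne_zero L).mono fun n => (hM n).2) fun n hn => ?_
  have := isSeparable_adjoin_pow_image (K := K) hΔ0 ((hM n).1 hn)
  exact IsQuasiGalois.mem_of_forall_algEquiv_apply_eq hqg _
    fun σ => (mem_fixedField_iff _ _).1 hx σ trivial
end

section
/- Let L/K be a field extension. If every K-conjugation of L (i.e., the image of every K-embedding-type isomorphism onto a subfield of an algebraic closure fixing a transcendence basis setup) is contained in L, then for every element x ∈ L algebraic over an intermediate field F with K ⊆ F ⊆ L, every F-conjugate of x lies in L. -/
/-! Let `y` be an `F`-conjugate of `x ∈ L` and `M` the algebraic closure of `F` in `Ω`; some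
`F`-endomorphism `τ` of `M` sends `x` to `y`. A transcendence basis `Δ ⊆ L` of `Ω / F` is also one
of `Ω / M`, so `τ` extends to `M(Δ)` by fixing `Δ`, and then to the algebraic extension `Ω` of
`M(Δ)`. The resulting `ψ : Ω → Ω` fixes `F ∪ Δ`, hence a transcendence basis `Δs ⊆ F ∪ Δ` of
`Ω / K`, so `ψ(L)` is a `K`-conjugation of `L` and `y = ψ x ∈ ψ(L) ⊆ L`. -/

open Polynomial IntermediateField

theorem IsAlgClosed.exists_ringHom_comp_algebraMap_eq {R S M : Type*} [CommRing R] [IsDomain R]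
    [CommRing S] [IsDomain S] [Algebra R S] [Module.IsTorsionFree R S] [Algebra.IsAlgebraic R S]
    [Field M] [IsAlgClosed M] {f : R →+* M} (hf : Function.Injective f) :
    ∃ ψ : S →+* M, ψ.comp (algebraMap R S) = f := by
  let _ : Algebra R M := f.toAlgebra
  have : Module.IsTorsionFree R M := Module.isTorsionFree_iff_algebraMap_injective.mpr hf
  exact ⟨(IsAlgClosed.lift : S →ₐ[R] M).toRingHom, (IsAlgClosed.lift : S →ₐ[R] M).comp_algebraMap⟩

theorem IsTranscendenceBasis.exists_algHom_extend {k A Ω ι : Type*} [Field k] [Field A] [Field Ω]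
    [IsAlgClosed Ω] [Algebra k A] [Algebra k Ω] [Algebra A Ω] [IsScalarTower k A Ω]
    {v : ι → Ω} (hv : IsTranscendenceBasis A v) (τ : A →ₐ[k] A) :
    ∃ ψ : Ω →ₐ[k] Ω, (∀ a, ψ (algebraMap A Ω a) = algebraMap A Ω (τ a)) ∧ ∀ i, ψ (v i) = v i := by
  -- `MvPolynomial ι A ≅ A[v]` acts on `Ω` by evaluation at `v`; `τ` acts on it coefficientwise.
  let _ : Algebra (MvPolynomial ι A) Ω := (MvPolynomial.aeval v).toAlgebra
  have : IsScalarTower A (MvPolynomial ι A) Ω :=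
    .of_algebraMap_eq fun a => (MvPolynomial.aeval_C v a).symm
  have hv_inj := algebraicIndependent_iff_injective_aeval.mp hv.1
  have : Module.IsTorsionFree (MvPolynomial ι A) Ω :=
    Module.isTorsionFree_iff_algebraMap_injective.mpr hv_inj
  have : Algebra.IsAlgebraic (MvPolynomial ι A) Ω := hv.isAlgebraic_iff.mpr fun i => by
    simpa [RingHom.algebraMap_toAlgebra] using
      isAlgebraic_algebraMap (R := MvPolynomial ι A) (A := Ω) (MvPolynomial.X i)
  obtain ⟨ψ, hψ⟩ := IsAlgClosed.exists_ringHom_comp_algebraMap_eq (S := Ω)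
    (f := (MvPolynomial.aeval v).toRingHom.comp (MvPolynomial.map τ.toRingHom))
    (hv_inj.comp (MvPolynomial.map_injective τ.toRingHom τ.toRingHom.injective))
  have hψτ : ∀ a, ψ (algebraMap A Ω a) = algebraMap A Ω (τ a) := fun a => by
    simpa [RingHom.algebraMap_toAlgebra] using RingHom.congr_fun hψ (MvPolynomial.C a)
  refine ⟨{ ψ with commutes' := fun c => ?_ }, hψτ, fun i => ?_⟩
  · simpa [IsScalarTower.algebraMap_apply k A Ω] using hψτ (algebraMap k A c)
  · simpa [RingHom.algebraMap_toAlgebra] using RingHom.congr_fun hψ (MvPolynomial.X i)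

theorem exists_algHom_algebraicClosure_apply_eq {F E : Type*} [Field F] [Field E] [Algebra F E]
    [IsAlgClosed E] {x y : E} (hx : x ∈ algebraicClosure F E) (hy : aeval y (minpoly F x) = 0) :
    ∃ τ : algebraicClosure F E →ₐ[F] algebraicClosure F E, (τ ⟨x, hx⟩ : E) = y := by
  obtain ⟨φ, hφ⟩ := exists_algHom_of_splits_of_aeval (E := algebraicClosure F E) (K := E)
    (fun s => ⟨Algebra.IsIntegral.isIntegral s, IsAlgClosed.splits _⟩)
    (x := ⟨x, hx⟩) (by rwa [minpoly_eq])
  exact ⟨φ.codRestrict (algebraicClosure F E).toSubalgebra fun s =>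
    mem_algebraicClosure_iff.mpr ((Algebra.IsAlgebraic.isAlgebraic s).algHom φ), hφ⟩

theorem IntermediateField.isAlgebraic_algebraAdjoin_of_le {K Ω : Type*} [Field K] [Field Ω]
    [Algebra K Ω] {F L : IntermediateField K Ω} (hFL : F ≤ L) [Algebra.IsAlgebraic L Ω] :
    Algebra.IsAlgebraic (Algebra.adjoin F (L : Set Ω)) Ω := by
  have hL : adjoin F (L : Set Ω) = extendScalars hFL :=
    le_antisymm (adjoin_le_iff.mpr fun _ => id) (fun _ h => subset_adjoin F (L : Set Ω) h)
  rw [← isAlgebraic_adjoin_iff_top, hL]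
  assumption

theorem IsTranscendenceBasis.isAlgebraic_adjoin_set {F E : Type*} [Field F] [Field E]
    [Algebra F E] {s : Set E} (hs : IsTranscendenceBasis F ((↑) : s → E)) :
    Algebra.IsAlgebraic (adjoin F s) E := by
  have := hs.isAlgebraic_field
  rwa [Subtype.range_val] at this

theorem IntermediateField.exists_isTranscendenceBasis_subset_union {K Ω : Type*} [Field K]
    [Field Ω] [Algebra K Ω] (F : IntermediateField K Ω) {Δ : Set Ω}
    (hΔ : IsTranscendenceBasis F ((↑) : Δ → Ω)) :
    ∃ Δs ⊆ (F : Set Ω) ∪ Δ, IsTranscendenceBasis K ((↑) : Δs → Ω) := by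
  have : Algebra.IsAlgebraic (adjoin K ((F : Set Ω) ∪ Δ)) Ω := by
    rw [← restrictScalars_adjoin]
    exact hΔ.isAlgebraic_adjoin_set
  rw [isAlgebraic_adjoin_iff_top] at this
  exact exists_isTranscendenceBasis_subset _

/-- If every K-conjugation of L (inside a fixed algebraic closure Ω of L,
via an isomorphism fixing K(Δ) for some transcendence basis Δ of L over K) is contained
in L, then for every intermediate field K ⊆ F ⊆ L and every x ∈ L algebraic over F,
every F-conjugate of x lies in L. -/
theorem conjugations_contained_implies_conjugates_in
    {K Ω : Type*} [Field K] [Field Ω] [Algebra K Ω] [IsAlgClosed Ω]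
    (L : IntermediateField K Ω)
    -- Ω is an algebraic closure of L
    (halg : Algebra.IsAlgebraic L Ω)
    -- every K-conjugation of L is contained in L
    (hconj : ∀ (Δ : Set Ω), Δ ⊆ (L : Set Ω) →
      AlgebraicIndependent K ((↑) : Δ → Ω) →
      (∀ x ∈ L, IsAlgebraic (IntermediateField.adjoin K Δ) x) →
      ∀ (L' : IntermediateField K Ω) (σ : L ≃+* L'),
        (∀ z : L, (z : Ω) ∈ IntermediateField.adjoin K Δ → ((σ z : L') : Ω) = (z : Ω)) →
        L' ≤ L) :
    ∀ (F : IntermediateField K Ω), F ≤ L → ∀ x : Ω, x ∈ L → IsAlgebraic F x →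
      ∀ y : Ω, Polynomial.aeval y (minpoly F x) = 0 → y ∈ L := by
  intro F hFL x hxL hxF y hy
  obtain ⟨τ, hτx⟩ := exists_algHom_algebraicClosure_apply_eq (mem_algebraicClosure_iff.mpr hxF) hy
  have := isAlgebraic_algebraAdjoin_of_le hFL
  obtain ⟨Δ, hΔL, hΔ⟩ := exists_isTranscendenceBasis_subset (R := F) (L : Set Ω)
  have : FaithfulSMul F (algebraicClosure F Ω) :=
    (faithfulSMul_iff_algebraMap_injective _ _).mpr (algebraMap F (algebraicClosure F Ω)).injective
  obtain ⟨ψ, hψτ, hψΔ⟩ := ((Algebra.IsAlgebraic.isTranscendenceBasis_iff F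
    (algebraicClosure F Ω)).mp hΔ).exists_algHom_extend τ
  obtain ⟨Δs, hΔsFΔ, hΔs⟩ := F.exists_isTranscendenceBasis_subset_union hΔ
  let ψK : Ω →ₐ[K] Ω := ψ.restrictScalars K
  have hψΔs (z : Ω) (hz : z ∈ Δs) : ψ z = z :=
    (hΔsFΔ hz).elim (fun hzF => ψ.commutes ⟨z, hzF⟩) (fun hzΔ => hψΔ ⟨z, hzΔ⟩)
  have hψ_adjoin (z : Ω) (hz : z ∈ adjoin K Δs) : ψ z = z :=
    DFunLike.congr_fun (adjoin_algHom_ext K (φ₁ := ψK.comp (adjoin K Δs).val)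
      (φ₂ := (adjoin K Δs).val) hψΔs) ⟨z, hz⟩
  have hψL : (ψK.comp L.val).fieldRange ≤ L :=
    hconj Δs (hΔsFΔ.trans (Set.union_subset hFL hΔL)) hΔs.1
      (fun z _ => hΔs.isAlgebraic_adjoin_set.isAlgebraic z) _
      (AlgEquiv.ofInjectiveField (ψK.comp L.val)).toRingEquiv fun z hz => hψ_adjoin z hz
  exact hψL ⟨⟨x, hxL⟩, (hψτ ⟨x, _⟩).trans hτx⟩
end
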